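/- arXiv:2109.12967 — 4 statements merged into one kernel-verified Lean document; each statement's English description precedes it below -/
import Mathlib

section
/- Let C > 0 and let b, b', m, m' ∈ ℝⁿ with all entries positive, b ≤ b' and m ≤ m' componentwise. Suppose λ > 0 satisfies ∑_i max{m_i - λ/b_i, 0} = C and λ' satisfies ∑_i max{m'_i - λ'/b'_i, 0} = C. Then λ ≤ λ'. -/
/-!
If `lam' < lam`, every term `m i - lam / b i` is strictly smaller than `m' i - lam' / b' i`.
Since `C > 0`, some term of the first balance sum is positive, so truncating at `0` keeps the
inequality strict there and the second sum would exceed `C`.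
-/

open Finset

theorem Finset.sum_max_zero_lt_sum_max_zero {ι α : Type*} [AddCommGroup α] [LinearOrder α]
    [IsOrderedCancelAddMonoid α] {s : Finset ι} {f g : ι → α} (hfg : ∀ i ∈ s, f i < g i)
    (hpos : 0 < ∑ i ∈ s, max (f i) 0) : ∑ i ∈ s, max (f i) 0 < ∑ i ∈ s, max (g i) 0 := by
  obtain ⟨j, hj, hfj⟩ : ∃ j ∈ s, (0 : α) < max (f j) 0 :=
    exists_lt_of_sum_lt (by simpa using hpos)
  refine sum_lt_sum (fun i hi => max_le_max_right 0 (hfg i hi).le) ⟨j, hj, ?_⟩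
  have hfj' : 0 < f j := by simpa using hfj
  calc max (f j) 0 = f j := max_eq_left hfj'.le
    _ < g j := hfg j hj
    _ ≤ max (g j) 0 := le_max_left _ _

theorem sub_div_lt_sub_div_of_lt {α : Type*} [Field α] [LinearOrder α] [IsStrictOrderedRing α]
    {m m' b b' lam lam' : α} (hb : 0 < b) (hbb : b ≤ b') (hmm : m ≤ m') (hlam : 0 < lam)
    (hlt : lam' < lam) : m - lam / b < m' - lam' / b' := by
  have hb' : 0 < b' := hb.trans_le hbb
  have : lam' / b' < lam / b := calc
    lam' / b' < lam / b' := div_lt_div_of_pos_right hlt hb'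
    _ ≤ lam / b := div_le_div_of_nonneg_left hlam.le hb hbb
  linarith

theorem stmt_2_general (n : ℕ) (b b' m m' : Fin n → ℝ) (C lam lam' : ℝ)
    (hC : 0 < C)
    (hb : ∀ i, 0 < b i)
    (hble : ∀ i, b i ≤ b' i) (hmle : ∀ i, m i ≤ m' i)
    (hlam : 0 < lam)
    (hbal : ∑ i, max (m i - lam / b i) 0 = C)
    (hbal' : ∑ i, max (m' i - lam' / b' i) 0 = C) :
    lam ≤ lam' := by
  by_contra! hlt
  have hsum := sum_max_zero_lt_sum_max_zero
    (fun i _ => sub_div_lt_sub_div_of_lt (hb i) (hble i) (hmle i) hlam hlt) (hbal ▸ hC)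
  rw [hbal, hbal'] at hsum
  exact hsum.false

theorem stmt_2 (n : ℕ) (b b' m m' : Fin n → ℝ) (C lam lam' : ℝ)
    (hC : 0 < C)
    (hb : ∀ i, 0 < b i) (hb' : ∀ i, 0 < b' i)
    (hm : ∀ i, 0 < m i) (hm' : ∀ i, 0 < m' i)
    (hble : ∀ i, b i ≤ b' i) (hmle : ∀ i, m i ≤ m' i)
    (hlam : 0 < lam)
    (hbal : ∑ i, max (m i - lam / b i) 0 = C)
    (hbal' : ∑ i, max (m' i - lam' / b' i) 0 = C) :
    lam ≤ lam' :=
  stmt_2_general n b b' m m' C lam lam' hC hb hble hmle hlam hbal hbal'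
end

section
/- Let n ≥ 1, C > 0, λ† > 0. Suppose b_max, m_max > 0 satisfy either (m_max ≤ C/n) or (m_max > C/n and b_max ≤ n λ†/(n m_max - C)). Then for any parameters with 0 < b_i ≤ b_max and 0 < m_i ≤ m_max for all i, any λ* satisfying ∑_{i=1}^n max{m_i - λ*/b_i, 0} = C satisfies λ* ≤ λ†. -/
/-
Each agent's demand `max (m i - λ / b i) 0` is monotone in `m i` and `b i` once `λ ≥ 0`, so the
balance equation forces `C ≤ n · (m_max - λ / b_max)`, i.e. `n λ ≤ b_max (n m_max - C)`. The
right-hand side is `≤ 0` in the first regime and `≤ n λ†` in the second.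
-/

open Finset

theorem max_sub_div_le_max_sub_div {lam b bmax m mmax : ℝ} (hlam : 0 ≤ lam) (hb : 0 < b)
    (hble : b ≤ bmax) (hmle : m ≤ mmax) :
    max (m - lam / b) 0 ≤ max (mmax - lam / bmax) 0 := by
  have : lam / bmax ≤ lam / b := div_le_div_of_nonneg_left hlam hb hble
  exact max_le_max (by linarith) le_rfl

theorem sum_max_sub_div_le {ι : Type*} [Fintype ι] {lam bmax mmax : ℝ} {b m : ι → ℝ}
    (hlam : 0 ≤ lam) (hb : ∀ i, 0 < b i) (hble : ∀ i, b i ≤ bmax) (hmle : ∀ i, m i ≤ mmax) :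
    ∑ i, max (m i - lam / b i) 0 ≤ Fintype.card ι * max (mmax - lam / bmax) 0 := by
  calc ∑ i, max (m i - lam / b i) 0 ≤ ∑ _i : ι, max (mmax - lam / bmax) 0 :=
        sum_le_sum fun i _ => max_sub_div_le_max_sub_div hlam (hb i) (hble i) (hmle i)
    _ = Fintype.card ι * max (mmax - lam / bmax) 0 := by
        rw [sum_const, nsmul_eq_mul, card_univ]

theorem card_mul_le_of_sum_max_sub_div_eq {ι : Type*} [Fintype ι] {C lam bmax mmax : ℝ}
    {b m : ι → ℝ} (hC : 0 < C) (hbmax : 0 < bmax) (hlam : 0 ≤ lam) (hb : ∀ i, 0 < b i)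
    (hble : ∀ i, b i ≤ bmax) (hmle : ∀ i, m i ≤ mmax)
    (hbal : ∑ i, max (m i - lam / b i) 0 = C) :
    Fintype.card ι * lam ≤ bmax * (Fintype.card ι * mmax - C) := by
  have hsum := hbal ▸ sum_max_sub_div_le hlam hb hble hmle
  have hpos : 0 < mmax - lam / bmax := by
    by_contra! h
    rw [max_eq_right h, mul_zero] at hsum
    linarith
  rw [max_eq_left hpos.le] at hsum
  have : bmax * (lam / bmax) = lam := mul_div_cancel₀ lam hbmax.ne'
  nlinarith

theorem stmt_4_general (n : ℕ) (hn : 1 ≤ n) (C lamd bmax mmax : ℝ)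
    (hC : 0 < C) (hlamd : 0 < lamd) (hbmax : 0 < bmax)
    (hset : mmax ≤ C / n ∨ (mmax > C / n ∧ bmax ≤ n * lamd / (n * mmax - C)))
    (b m : Fin n → ℝ)
    (hb : ∀ i, 0 < b i) (hble : ∀ i, b i ≤ bmax)
    (hmle : ∀ i, m i ≤ mmax)
    (lam : ℝ) (hbal : ∑ i, max (m i - lam / b i) 0 = C) :
    lam ≤ lamd := by
  rcases le_or_gt lam 0 with hlam | hlam
  · linarith
  have hnpos : (0 : ℝ) < n := by exact_mod_cast hn
  have hkey : n * lam ≤ bmax * (n * mmax - C) := by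
    simpa using card_mul_le_of_sum_max_sub_div_eq hC hbmax hlam.le hb hble hmle hbal
  rcases hset with hsmall | ⟨hlarge, hbmaxle⟩
  · have : n * mmax - C ≤ 0 := by rw [le_div_iff₀ hnpos] at hsmall; linarith
    have := hkey.trans (mul_nonpos_of_nonneg_of_nonpos hbmax.le this)
    exact absurd this (mul_pos hnpos hlam).not_ge
  · have hden : 0 < n * mmax - C := by rw [gt_iff_lt, div_lt_iff₀ hnpos] at hlarge; linarith
    exact le_of_mul_le_mul_left (hkey.trans ((le_div_iff₀ hden).mp hbmaxle)) hnpos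

theorem stmt_4 (n : ℕ) (hn : 1 ≤ n) (C lamd bmax mmax : ℝ)
    (hC : 0 < C) (hlamd : 0 < lamd) (hbmax : 0 < bmax) (hmmax : 0 < mmax)
    (hset : mmax ≤ C / n ∨ (mmax > C / n ∧ bmax ≤ n * lamd / (n * mmax - C)))
    (b m : Fin n → ℝ)
    (hb : ∀ i, 0 < b i) (hble : ∀ i, b i ≤ bmax)
    (hm : ∀ i, 0 < m i) (hmle : ∀ i, m i ≤ mmax)
    (lam : ℝ) (hbal : ∑ i, max (m i - lam / b i) 0 = C) :
    lam ≤ lamd :=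
  stmt_4_general n hn C lamd bmax mmax hC hlamd hbmax hset b m hb hble hmle lam hbal
end

section
/- Suppose λ* ≥ 0 and for each i, x*_i maximizes min{β_i x, φ_i β_i} - λ* x over x ≥ 0, with β_i, φ_i > 0, and ∑_{i=1}^n x*_i = C where C > 0. If ∑ φ_i < C then λ* = 0; if ∑ φ_i > C then λ* > 0. -/
/-!
Testing the satiation point `y = φᵢ` in agent `i`'s optimality condition gives
`λ xᵢ ≤ λ φᵢ`, so a positive price keeps every demand below satiation, while at price zero
every agent demands at least `φᵢ`. Summing, `∑ φᵢ < C = ∑ xᵢ` rules out a positive price and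
`∑ φᵢ > C` rules out the zero price.
-/

section SingleAgent

variable {β φ lam x : ℝ}

theorem demand_le_satiation_of_pos_price (hφ : 0 ≤ φ) (hlam : 0 < lam)
    (hopt : ∀ y : ℝ, 0 ≤ y → min (β * y) (φ * β) - lam * y ≤ min (β * x) (φ * β) - lam * x) :
    x ≤ φ := by
  have htest := hopt φ hφ
  rw [mul_comm β φ, min_self] at htest
  have : lam * x ≤ lam * φ := by linarith [min_le_right (β * x) (φ * β)]
  exact le_of_mul_le_mul_left this hlam

theorem satiation_le_demand_of_zero_price (hβ : 0 < β) (hφ : 0 ≤ φ)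
    (hopt : ∀ y : ℝ, 0 ≤ y → min (β * y) (φ * β) - 0 * y ≤ min (β * x) (φ * β) - 0 * x) :
    φ ≤ x := by
  have htest := hopt φ hφ
  rw [mul_comm β φ, min_self, zero_mul, zero_mul, sub_zero, sub_zero] at htest
  have : φ * β ≤ x * β := by linarith [min_le_left (β * x) (φ * β)]
  exact le_of_mul_le_mul_right this hβ

end SingleAgent

theorem stmt_7_general (n : ℕ) (β φ : Fin n → ℝ) (lam C : ℝ) (x : Fin n → ℝ)
    (hβ : ∀ i, 0 < β i) (hφ : ∀ i, 0 < φ i) (hlam : 0 ≤ lam)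
    (hopt : ∀ i, ∀ y : ℝ, 0 ≤ y →
      min (β i * y) (φ i * β i) - lam * y ≤ min (β i * x i) (φ i * β i) - lam * x i)
    (hbal : ∑ i, x i = C) :
    ((∑ i, φ i) < C → lam = 0) ∧ ((∑ i, φ i) > C → 0 < lam) := by
  subst hbal
  constructor
  · intro hlt
    by_contra hne
    have hpos : 0 < lam := lt_of_le_of_ne hlam (Ne.symm hne)
    have hsum : ∑ i, x i ≤ ∑ i, φ i := Finset.sum_le_sum fun i _ =>
      demand_le_satiation_of_pos_price (hφ i).le hpos (hopt i)
    linarith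
  · intro hgt
    refine lt_of_le_of_ne hlam fun hzero => ?_
    subst hzero
    have hsum : ∑ i, φ i ≤ ∑ i, x i := Finset.sum_le_sum fun i _ =>
      satiation_le_demand_of_zero_price (hβ i) (hφ i).le (hopt i)
    linarith

theorem stmt_7 (n : ℕ) (β φ : Fin n → ℝ) (lam C : ℝ) (x : Fin n → ℝ)
    (hβ : ∀ i, 0 < β i) (hφ : ∀ i, 0 < φ i) (hlam : 0 ≤ lam) (hC : 0 < C)
    (hx : ∀ i, 0 ≤ x i)
    (hopt : ∀ i, ∀ y : ℝ, 0 ≤ y →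
      min (β i * y) (φ i * β i) - lam * y ≤ min (β i * x i) (φ i * β i) - lam * x i)
    (hbal : ∑ i, x i = C) :
    ((∑ i, φ i) < C → lam = 0) ∧ ((∑ i, φ i) > C → 0 < lam) :=
  stmt_7_general n β φ lam C x hβ hφ hlam hopt hbal
end

section
/- Let n ≥ 1, C > 0, and b_i, m_i > 0 for all i with ∑_{i=1}^n m_i > C. Then there exists a unique λ* > 0 such that ∑_{i=1}^n max{m_i - λ*/b_i, 0} = C. -/
/-!
The aggregate demand `λ ↦ ∑ max (m i - λ / b i) 0` is continuous, is at least `∑ m i > C` at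
`λ = 0`, vanishes for large `λ`, and is strictly decreasing wherever it is positive. The
intermediate value theorem gives a root of `demand λ = C`, and strict decrease on the positive
part makes it unique.
-/

open Filter Finset Set

variable {ι : Type*} [Fintype ι]

noncomputable def totalDemand (b m : ι → ℝ) (lam : ℝ) : ℝ :=
  ∑ i, max (m i - lam / b i) 0

namespace totalDemand

variable (b m : ι → ℝ)

theorem continuous : Continuous (totalDemand b m) :=
  continuous_finsetSum _ fun _ _ =>
    (continuous_const.sub (continuous_id.div_const _)).max continuous_const

theorem sum_le_apply_zero : ∑ i, m i ≤ totalDemand b m 0 :=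
  sum_le_sum fun i _ => by simp

theorem eventually_eq_zero (hb : ∀ i, 0 < b i) : ∀ᶠ lam in atTop, totalDemand b m lam = 0 := by
  have hterm : ∀ i, ∀ᶠ lam in atTop, max (m i - lam / b i) 0 = 0 := fun i => by
    filter_upwards [eventually_ge_atTop (b i * m i)] with lam hlam
    exact max_eq_right (sub_nonpos.mpr ((le_div_iff₀ (hb i)).mpr (by linarith)))
  filter_upwards [eventually_all.mpr hterm] with lam hlam
  exact sum_eq_zero fun i _ => hlam i

theorem strictAntiOn (hb : ∀ i, 0 < b i) :
    StrictAntiOn (totalDemand b m) {lam | 0 < totalDemand b m lam} := by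
  intro x _ y (hy : 0 < ∑ j, max (m j - y / b j) 0) hxy
  obtain ⟨i, -, hi⟩ := exists_ne_zero_of_sum_ne_zero (ne_of_gt hy)
  have hi_pos : 0 < m i - y / b i := by
    by_contra! h
    exact hi (max_eq_right h)
  refine sum_lt_sum (fun j _ => ?_) ⟨i, mem_univ i, ?_⟩
  · have : x / b j ≤ y / b j := div_le_div_of_nonneg_right hxy.le (hb j).le
    exact max_le_max (by linarith) le_rfl
  · have : x / b i < y / b i := div_lt_div_of_pos_right hxy (hb i)
    rw [max_eq_left hi_pos.le]
    exact lt_max_of_lt_left (by linarith)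

end totalDemand

theorem stmt_15_general (n : ℕ) (C : ℝ) (hC : 0 < C) (b m : Fin n → ℝ)
    (hb : ∀ i, 0 < b i) (hsum : C < ∑ i, m i) :
    ∃! lam : ℝ, 0 < lam ∧ ∑ i, max (m i - lam / b i) 0 = C := by
  obtain ⟨Λ, hΛ, hΛ0⟩ :=
    ((totalDemand.eventually_eq_zero b m hb).and (eventually_ge_atTop 0)).exists
  have hC_mem : C ∈ Icc (totalDemand b m Λ) (totalDemand b m 0) :=
    ⟨hΛ ▸ hC.le, hsum.le.trans (totalDemand.sum_le_apply_zero b m)⟩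
  obtain ⟨lam, hlam, hlamC⟩ :=
    intermediate_value_Icc' hΛ0 (totalDemand.continuous b m).continuousOn hC_mem
  have hlam_ne : lam ≠ 0 := by
    rintro rfl
    linarith [totalDemand.sum_le_apply_zero b m]
  refine ⟨lam, ⟨lt_of_le_of_ne hlam.1 hlam_ne.symm, hlamC⟩, fun y ⟨_, hyC⟩ => ?_⟩
  change totalDemand b m y = C at hyC
  exact (totalDemand.strictAntiOn b m hb).injOn (hyC ▸ hC : 0 < totalDemand b m y)
    (hlamC ▸ hC : 0 < totalDemand b m lam) (hyC.trans hlamC.symm)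

theorem stmt_15 (n : ℕ) (hn : 1 ≤ n) (C : ℝ) (hC : 0 < C) (b m : Fin n → ℝ)
    (hb : ∀ i, 0 < b i) (hm : ∀ i, 0 < m i) (hsum : C < ∑ i, m i) :
    ∃! lam : ℝ, 0 < lam ∧ ∑ i, max (m i - lam / b i) 0 = C :=
  stmt_15_general n C hC b m hb hsum
end
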